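/- Consider any broadcasted party-list election E = (N, C, k, l, A, L) with parties P_1, …, P_g whose popularities are strictly decreasing (n_1 > n_2 > … > n_g), in which every party has at least l candidates (|P_i| ≥ l for all i) and the parties jointly have at least k candidates (Σ_{i=1}^g |P_i| ≥ k). Then the CC-improvement of LV over AV equals IMP_CC(E) = (Σ_{i=1}^{min(⌈k/l⌉, g)} n_i) / (Σ_{j=1}^{s} n_j), where s is the least integer t with Σ_{i=1}^{t} |P_i| ≥ k. -/

import Mathlib

open Finset

/-- An election `E = (N, C, k, l, A, L)`: voters form the finite type `V`,
candidates the finite type `C`, `k` is the committee size, `l` the ballot limit,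
`A i` is the approval set of voter `i` and `L i` their ballot. -/
structure Election (V C : Type*) [Fintype V] [DecidableEq V] [Fintype C] [DecidableEq C] where
  k : ℕ
  l : ℕ
  A : V → Finset C
  L : V → Finset C
  k_le_card : k ≤ Fintype.card C
  one_le_l : 1 ≤ l
  l_le_k : l ≤ k
  ballot_card : ∀ i, (L i).card = l
  ballot_sub_approval : ∀ i, l ≤ (A i).card → L i ⊆ A i
  approval_ssub_ballot : ∀ i, (A i).card < l → A i ⊂ L i

variable {V C : Type*} [Fintype V] [DecidableEq V] [Fintype C] [DecidableEq C]

/-- The LV-score of a candidate: the number of voters whose ballot contains it. -/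
def sLVc (E : Election V C) (c : C) : ℕ := (univ.filter fun i => c ∈ E.L i).card

/-- The AV-score of a candidate: the number of voters approving it. -/
def sAVc (E : Election V C) (c : C) : ℕ := (univ.filter fun i => c ∈ E.A i).card

/-- The LV-score of a committee. -/
def sLV (E : Election V C) (W : Finset C) : ℕ := ∑ c ∈ W, sLVc E c

/-- The AV-score of a committee. -/
def sAV (E : Election V C) (W : Finset C) : ℕ := ∑ c ∈ W, sAVc E c

/-- The winning committees of Limited Voting: size-`k` committees maximizing the LV-score. -/
def LVwin (E : Election V C) : Set (Finset C) :=
  {W | W.card = E.k ∧ ∀ W' : Finset C, W'.card = E.k → sLV E W' ≤ sLV E W}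

/-- The winning committees of Approval Voting: size-`k` committees maximizing the AV-score. -/
def AVwin (E : Election V C) : Set (Finset C) :=
  {W | W.card = E.k ∧ ∀ W' : Finset C, W'.card = E.k → sAV E W' ≤ sAV E W}

/-- The Chamberlin–Courant score of a committee: the number of represented voters. -/
def sCC (E : Election V C) (W : Finset C) : ℕ :=
  (univ.filter fun i => (W ∩ E.A i).Nonempty).card

/-- `A` is a party-list profile: approval sets are nonempty and pairwise equal or disjoint. -/
def PartyList (E : Election V C) : Prop :=
  (∀ i, (E.A i).Nonempty) ∧ ∀ i j : V, E.A i = E.A j ∨ E.A i ∩ E.A j = ∅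

/-- `E` is consistent with some broadcasting (linear) order on candidates, encoded by an
injective priority function `f` (`f c < f c'` meaning `c ≻ c'`). -/
def Broadcasted (E : Election V C) : Prop :=
  ∃ f : C → ℕ, Function.Injective f ∧
    ∀ (i : V) (c c' : C), c ∈ E.A i → c' ∈ E.A i → c ∈ E.L i → c' ∉ E.L i → f c < f c'

/-- The number of voters of party `Pj`. -/
def nParty (E : Election V C) (Pj : Finset C) : ℕ := (univ.filter fun i => E.A i = Pj).card

/-!
In a party-list profile every candidate of party `P j` has AV-score `n j`. The broadcasting
order forces all voters of a party to cast the same ballot `T j ⊆ P j`, so the candidates of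
`T j` have LV-score `n j` and every other candidate has LV-score `0`. When scores are constant
on blocks, with strictly decreasing positive values, a size-`k` committee of maximal score meets
block `j` exactly when the blocks before `j` have fewer than `k` candidates in total. For AV the
blocks are the parties, so every AV-winner meets exactly the first `s` parties; for LV they are
the ballots, of size `l` each, so every LV-winner meets exactly the first `min ⌈k/l⌉ g` parties.
Thus `sCC` is constant on either set of winners.
-/

section TopK

variable {α : Type*}

def IsTopK (sc : α → ℕ) (k : ℕ) (W : Finset α) : Prop :=
  W.card = k ∧ ∀ W' : Finset α, W'.card = k → ∑ c ∈ W', sc c ≤ ∑ c ∈ W, sc c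

theorem exists_isTopK [Fintype α] (sc : α → ℕ) {k : ℕ} (hk : k ≤ Fintype.card α) :
    ∃ W, IsTopK sc k W := by
  obtain ⟨W, hW, hmax⟩ := exists_max_image (powersetCard k univ) (∑ c ∈ ·, sc c)
    (powersetCard_nonempty.2 (by rwa [card_univ]))
  exact ⟨W, (mem_powersetCard.1 hW).2, fun W' hW' =>
    hmax W' (mem_powersetCard.2 ⟨subset_univ W', hW'⟩)⟩

theorem pairwise_disjoint_of_forall_mem_eq {ι β : Type*} {sc : α → β} {Q : ι → Finset α}
    {w : ι → β} (hw : Function.Injective w) (hQ : ∀ j, ∀ c ∈ Q j, sc c = w j) :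
    Pairwise (Function.onFun Disjoint Q) := fun i j hij =>
  disjoint_left.2 fun c hci hcj => hij (hw ((hQ i c hci).symm.trans (hQ j c hcj)))

namespace IsTopK

variable [DecidableEq α] {sc : α → ℕ} {k : ℕ} {W : Finset α}

theorem score_le (hW : IsTopK sc k W) {c d : α} (hc : c ∈ W) (hd : d ∉ W) : sc d ≤ sc c := by
  have hd' : d ∉ W.erase c := fun h => hd (mem_of_mem_erase h)
  have hcard : (insert d (W.erase c)).card = k := by
    rw [card_insert_of_notMem hd', card_erase_of_mem hc, hW.1, Nat.sub_add_cancel]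
    exact hW.1 ▸ card_pos.2 ⟨c, hc⟩
  have := hW.2 _ hcard
  rw [sum_insert hd', ← add_sum_erase W sc hc] at this
  omega

theorem inter_nonempty_iff_of_subset (hW : IsTopK sc k W) {Q R : Finset α} (hQR : Q ⊆ R)
    (hR : ∀ c ∈ R \ Q, sc c = 0) (hQ : ∀ c ∈ Q, 0 < sc c) (hQne : Q.Nonempty) :
    (W ∩ R).Nonempty ↔ (W ∩ Q).Nonempty := by
  refine ⟨fun ⟨c, hc⟩ => ?_, fun h => h.mono (inter_subset_inter_left hQR)⟩
  obtain ⟨hcW, hcR⟩ := mem_inter.1 hc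
  by_cases hcQ : c ∈ Q
  · exact ⟨c, mem_inter.2 ⟨hcW, hcQ⟩⟩
  obtain ⟨d, hd⟩ := hQne
  have hdW : d ∈ W := by
    by_contra hdW
    have := hW.score_le hcW hdW
    have := hQ d hd
    have := hR c (mem_sdiff.2 ⟨hcR, hcQ⟩)
    omega
  exact ⟨d, mem_inter.2 ⟨hdW, hd⟩⟩

variable {ι : Type*} [Fintype ι] [LinearOrder ι] {Q : ι → Finset α} {w : ι → ℕ}

theorem sum_card_lt_of_inter_nonempty (hW : IsTopK sc k W) (hw : StrictAnti w)
    (hQ : ∀ j, ∀ c ∈ Q j, sc c = w j) {j : ι} (hWj : (W ∩ Q j).Nonempty) :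
    ∑ i ∈ univ.filter (· < j), (Q i).card < k := by
  obtain ⟨c, hc⟩ := hWj
  obtain ⟨hcW, hcj⟩ := mem_inter.1 hc
  have hdisj := pairwise_disjoint_of_forall_mem_eq hw.injective hQ
  set U := (univ.filter (· < j)).biUnion Q
  have hcU : c ∉ U := by
    simp only [U, mem_biUnion, mem_filter, mem_univ, true_and, not_exists, not_and]
    exact fun i hij hci => disjoint_left.1 (hdisj hij.ne) hci hcj
  rw [← card_biUnion fun i _ i' _ h => hdisj h]
  by_contra! hU
  have hlt : (W.erase c).card < U.card := by
    rw [card_erase_of_mem hcW, hW.1]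
    exact lt_of_lt_of_le (Nat.sub_lt (hW.1 ▸ card_pos.2 ⟨c, hcW⟩) one_pos) hU
  obtain ⟨d, hdU, hdW⟩ := exists_mem_notMem_of_card_lt_card hlt
  have hdW : d ∉ W := fun h => hdW (mem_erase.2 ⟨fun hdc => hcU (hdc ▸ hdU), h⟩)
  obtain ⟨i, hij, hdi⟩ := mem_biUnion.1 hdU
  have := hW.score_le hcW hdW
  rw [hQ i d hdi, hQ j c hcj] at this
  exact (hw (mem_filter.1 hij).2).not_ge this

theorem inter_nonempty_of_sum_card_lt (hW : IsTopK sc k W) (hw : StrictAnti w)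
    (hw0 : ∀ j, 0 < w j) (hQ : ∀ j, ∀ c ∈ Q j, sc c = w j)
    (hsupp : ∀ c, sc c ≠ 0 → ∃ j, c ∈ Q j) {j : ι} (hj : (Q j).Nonempty)
    (hk : ∑ i ∈ univ.filter (· < j), (Q i).card < k) : (W ∩ Q j).Nonempty := by
  by_contra hWj
  obtain ⟨d, hdj⟩ := hj
  have hdW : d ∉ W := fun h => hWj ⟨d, mem_inter.2 ⟨h, hdj⟩⟩
  have hsub : W ⊆ (univ.filter (· < j)).biUnion Q := by
    intro c hcW
    have hdc := hW.score_le hcW hdW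
    rw [hQ j d hdj] at hdc
    obtain ⟨i, hci⟩ := hsupp c (by have := hw0 j; omega)
    have hij : i ≤ j := hw.le_iff_ge.1 (hQ i c hci ▸ hdc)
    have hne : i ≠ j := by rintro rfl; exact hWj ⟨c, mem_inter.2 ⟨hcW, hci⟩⟩
    exact mem_biUnion.2 ⟨i, mem_filter.2 ⟨mem_univ i, lt_of_le_of_ne hij hne⟩, hci⟩
  have := (card_le_card hsub).trans card_biUnion_le
  rw [hW.1] at this
  omega

theorem inter_nonempty_iff (hW : IsTopK sc k W) (hw : StrictAnti w)
    (hw0 : ∀ j, 0 < w j) (hQ : ∀ j, ∀ c ∈ Q j, sc c = w j)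
    (hsupp : ∀ c, sc c ≠ 0 → ∃ j, c ∈ Q j) {j : ι} (hj : (Q j).Nonempty) :
    (W ∩ Q j).Nonempty ↔ ∑ i ∈ univ.filter (· < j), (Q i).card < k :=
  ⟨hW.sum_card_lt_of_inter_nonempty hw hQ, hW.inter_nonempty_of_sum_card_lt hw hw0 hQ hsupp hj⟩

end IsTopK

end TopK

theorem Fin.sum_filter_lt_lt_iff_of_isLeast {g : ℕ} (a : Fin g → ℕ) {k s : ℕ}
    (hs : IsLeast {t | k ≤ ∑ j ∈ univ.filter (fun j : Fin g => (j : ℕ) < t), a j} s)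
    (j : Fin g) : ∑ i ∈ univ.filter (· < j), a i < k ↔ (j : ℕ) < s := by
  refine ⟨fun hk => lt_of_not_ge fun hsj => hk.not_ge (hs.1.trans ?_), fun hj => ?_⟩
  · exact sum_le_sum_of_subset fun i hi =>
      mem_filter.2 ⟨mem_univ i, Fin.lt_def.2 ((mem_filter.1 hi).2.trans_le hsj)⟩
  · exact lt_of_not_ge fun hk => hj.not_ge (hs.2 hk)

theorem Nat.mul_lt_iff_lt_min_ceilDiv {j l k g : ℕ} (hl : 0 < l) (hj : j < g) :
    j * l < k ↔ j < min ((k + l - 1) / l) g := by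
  rw [lt_min_iff, and_iff_left hj, ← Nat.ceilDiv_eq_add_pred_div, mul_comm, ← not_le,
    ← not_le (a := k ⌈/⌉ l), ceilDiv_le_iff_le_mul hl]

theorem nParty_approval_pos (E : Election V C) (i : V) : 0 < nParty E (E.A i) :=
  card_pos.2 ⟨i, mem_filter.2 ⟨mem_univ i, rfl⟩⟩

variable {E : Election V C}

theorem mem_LVwin_iff {W : Finset C} : W ∈ LVwin E ↔ IsTopK (sLVc E) E.k W := Iff.rfl

theorem mem_AVwin_iff {W : Finset C} : W ∈ AVwin E ↔ IsTopK (sAVc E) E.k W := Iff.rfl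

theorem exists_mem_approval_of_sAVc_ne_zero {c : C} (h : sAVc E c ≠ 0) : ∃ i, c ∈ E.A i := by
  obtain ⟨i, hi⟩ := card_ne_zero.1 h
  exact ⟨i, (mem_filter.1 hi).2⟩

theorem exists_mem_ballot_of_sLVc_ne_zero {c : C} (h : sLVc E c ≠ 0) : ∃ i, c ∈ E.L i := by
  obtain ⟨i, hi⟩ := card_ne_zero.1 h
  exact ⟨i, (mem_filter.1 hi).2⟩

theorem sCC_eq_sum_nParty {g : ℕ} {P : Fin g → Finset C} (hPall : ∀ i, ∃ j, E.A i = P j)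
    (hPinj : Function.Injective P) (W : Finset C) :
    sCC E W = ∑ j ∈ univ.filter (fun j => (W ∩ P j).Nonempty), nParty E (P j) := by
  unfold sCC nParty
  rw [← card_biUnion fun j _ j' _ hjj' => disjoint_left.2 fun i hi hi' =>
    hjj' (hPinj ((mem_filter.1 hi).2.symm.trans (mem_filter.1 hi').2))]
  congr 1
  ext i
  simp only [mem_filter, mem_univ, true_and, mem_biUnion]
  obtain ⟨j, hj⟩ := hPall i
  exact ⟨fun hW => ⟨j, hj ▸ hW, hj⟩, fun ⟨j', hW, hj'⟩ => hj' ▸ hW⟩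

theorem PartyList.approval_eq_of_mem (hPL : PartyList E) {i i' : V} {c : C}
    (hc : c ∈ E.A i) (hc' : c ∈ E.A i') : E.A i = E.A i' :=
  (hPL.2 i i').resolve_right (nonempty_iff_ne_empty.1 ⟨c, mem_inter.2 ⟨hc, hc'⟩⟩)

theorem PartyList.sAVc_eq_nParty (hPL : PartyList E) {i : V} {c : C} (hc : c ∈ E.A i) :
    sAVc E c = nParty E (E.A i) := by
  unfold sAVc nParty
  congr 1
  ext i'
  simp only [mem_filter, mem_univ, true_and]
  exact ⟨fun hc' => (hPL.approval_eq_of_mem hc hc').symm, fun h => h ▸ hc⟩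

section Ballots

variable (hl : ∀ i, E.l ≤ (E.A i).card)
include hl

-- Two voters of the same party list their first `l` candidates in the broadcasting order.
theorem Broadcasted.ballot_eq_of_approval_eq (hB : Broadcasted E) {i i' : V}
    (h : E.A i = E.A i') : E.L i = E.L i' := by
  have hcard : (E.L i).card = (E.L i').card := by rw [E.ballot_card, E.ballot_card]
  by_contra hne
  obtain ⟨c, hc, hc'⟩ := not_subset.1 fun hs => hne (eq_of_subset_of_card_le hs hcard.ge)
  obtain ⟨d, hd', hd⟩ := not_subset.1 fun hs => hne (eq_of_subset_of_card_le hs hcard.le).symm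
  have hLA := fun j => E.ballot_sub_approval j (hl j)
  obtain ⟨f, -, hf⟩ := hB
  have := hf i c d (hLA i hc) (h ▸ hLA i' hd') hc hd
  have := hf i' d c (hLA i' hd') (h ▸ hLA i hc) hd' hc'
  omega

theorem PartyList.sLVc_eq_nParty (hPL : PartyList E) (hB : Broadcasted E) {i : V} {c : C}
    (hc : c ∈ E.L i) : sLVc E c = nParty E (E.A i) := by
  have hLA := fun j => E.ballot_sub_approval j (hl j)
  unfold sLVc nParty
  congr 1
  ext i'
  simp only [mem_filter, mem_univ, true_and]
  exact ⟨fun hc' => (hPL.approval_eq_of_mem (hLA i hc) (hLA i' hc')).symm,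
    fun h => hB.ballot_eq_of_approval_eq hl h ▸ hc⟩

theorem PartyList.sLVc_eq_zero_of_mem_sdiff (hPL : PartyList E) (hB : Broadcasted E) {i : V}
    {c : C} (hc : c ∈ E.A i \ E.L i) : sLVc E c = 0 := by
  obtain ⟨hcA, hcL⟩ := mem_sdiff.1 hc
  by_contra h
  obtain ⟨i', hi'⟩ := exists_mem_ballot_of_sLVc_ne_zero h
  have hA := hPL.approval_eq_of_mem (E.ballot_sub_approval i' (hl i') hi') hcA
  exact hcL (hB.ballot_eq_of_approval_eq hl hA ▸ hi')

end Ballots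

section Parties

variable {g : ℕ} {P : Fin g → Finset C}

theorem sCC_eq_of_mem_AVwin (hPL : PartyList E) (hPall : ∀ i, ∃ j, E.A i = P j)
    (hPrep : ∀ j, ∃ i, E.A i = P j) (hanti : StrictAnti fun j => nParty E (P j)) {s : ℕ}
    (hs : IsLeast {t | E.k ≤ ∑ j ∈ univ.filter (fun j : Fin g => (j : ℕ) < t), (P j).card}
      s)
    {W : Finset C} (hW : W ∈ AVwin E) :
    sCC E W = ∑ j ∈ univ.filter (fun j : Fin g => (j : ℕ) < s), nParty E (P j) := by
  rw [mem_AVwin_iff] at hW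
  choose rep hrep using hPrep
  have hscore : ∀ j, ∀ c ∈ P j, sAVc E c = nParty E (P j) := fun j c hc => by
    rw [← hrep j] at hc ⊢
    exact hPL.sAVc_eq_nParty hc
  have hsupp : ∀ c, sAVc E c ≠ 0 → ∃ j, c ∈ P j := fun c hc => by
    obtain ⟨i, hi⟩ := exists_mem_approval_of_sAVc_ne_zero hc
    obtain ⟨j, hj⟩ := hPall i
    exact ⟨j, hj ▸ hi⟩
  rw [sCC_eq_sum_nParty hPall (hanti.injective.of_comp (f := nParty E)) W]
  refine sum_congr (filter_congr fun j _ => ?_) fun _ _ => rfl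
  rw [hW.inter_nonempty_iff hanti (fun j => hrep j ▸ nParty_approval_pos E (rep j)) hscore hsupp
    (hrep j ▸ hPL.1 (rep j))]
  exact Fin.sum_filter_lt_lt_iff_of_isLeast _ hs j

theorem sCC_eq_of_mem_LVwin (hPL : PartyList E) (hB : Broadcasted E)
    (hPall : ∀ i, ∃ j, E.A i = P j) (hPrep : ∀ j, ∃ i, E.A i = P j)
    (hanti : StrictAnti fun j => nParty E (P j)) (hPl : ∀ j, E.l ≤ (P j).card)
    {W : Finset C} (hW : W ∈ LVwin E) :
    sCC E W = ∑ j ∈ univ.filter (fun j : Fin g => (j : ℕ) < min ((E.k + E.l - 1) / E.l) g),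
      nParty E (P j) := by
  rw [mem_LVwin_iff] at hW
  choose rep hrep using hPrep
  have hl : ∀ i, E.l ≤ (E.A i).card := fun i => by
    obtain ⟨j, hj⟩ := hPall i
    exact hj ▸ hPl j
  have hn0 : ∀ j, 0 < nParty E (P j) := fun j => hrep j ▸ nParty_approval_pos E (rep j)
  have hTP : ∀ j, E.L (rep j) ⊆ P j := fun j => hrep j ▸ E.ballot_sub_approval _ (hl _)
  have hTne : ∀ j, (E.L (rep j)).Nonempty := fun j =>
    card_pos.1 (by rw [E.ballot_card]; exact E.one_le_l)
  have hscore : ∀ j, ∀ c ∈ E.L (rep j), sLVc E c = nParty E (P j) := fun j c hc =>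
    hrep j ▸ hPL.sLVc_eq_nParty hl hB hc
  have hzero : ∀ j, ∀ c ∈ P j \ E.L (rep j), sLVc E c = 0 := fun j c hc =>
    hPL.sLVc_eq_zero_of_mem_sdiff hl hB (by rwa [hrep j])
  have hsupp : ∀ c, sLVc E c ≠ 0 → ∃ j, c ∈ E.L (rep j) := fun c hc => by
    obtain ⟨i, hi⟩ := exists_mem_ballot_of_sLVc_ne_zero hc
    obtain ⟨j, hj⟩ := hPall i
    exact ⟨j, hB.ballot_eq_of_approval_eq hl (hj.trans (hrep j).symm) ▸ hi⟩
  have hcount : ∀ j : Fin g, ∑ i ∈ univ.filter (· < j), (E.L (rep i)).card = j * E.l := by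
    simp [E.ballot_card, filter_gt_eq_Iio]
  rw [sCC_eq_sum_nParty hPall (hanti.injective.of_comp (f := nParty E)) W]
  refine sum_congr (filter_congr fun j _ => ?_) fun _ _ => rfl
  rw [hW.inter_nonempty_iff_of_subset (hTP j) (hzero j) (fun c hc => hscore j c hc ▸ hn0 j)
      (hTne j), hW.inter_nonempty_iff hanti hn0 hscore hsupp (hTne j), hcount]
  exact Nat.mul_lt_iff_lt_min_ceilDiv E.one_le_l j.isLt

end Parties

theorem stmt2_general (E : Election V C) (hPL : PartyList E) (hB : Broadcasted E)
    (g : ℕ) (P : Fin g → Finset C)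
    (hPall : ∀ i : V, ∃ j, E.A i = P j)
    (hPrep : ∀ j, ∃ i : V, E.A i = P j)
    (hanti : ∀ j j' : Fin g, j < j' → nParty E (P j') < nParty E (P j))
    (hPl : ∀ j, E.l ≤ (P j).card)
    (s : ℕ)
    (hs : E.k ≤ ∑ j ∈ univ.filter (fun j : Fin g => (j : ℕ) < s), (P j).card)
    (hsleast : ∀ t : ℕ,
      E.k ≤ ∑ j ∈ univ.filter (fun j : Fin g => (j : ℕ) < t), (P j).card → s ≤ t) :
    ((sInf (sCC E '' LVwin E) : ℕ) : ℚ) / ((sSup (sCC E '' AVwin E) : ℕ) : ℚ) =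
      (∑ j ∈ univ.filter (fun j : Fin g => (j : ℕ) < min ((E.k + E.l - 1) / E.l) g),
          (nParty E (P j) : ℚ)) /
        (∑ j ∈ univ.filter (fun j : Fin g => (j : ℕ) < s), (nParty E (P j) : ℚ)) := by
  have hLV : ∀ W ∈ LVwin E, sCC E W = _ := fun W hW =>
    sCC_eq_of_mem_LVwin hPL hB hPall hPrep hanti hPl hW
  have hAV : ∀ W ∈ AVwin E, sCC E W = _ := fun W hW =>
    sCC_eq_of_mem_AVwin hPL hPall hPrep hanti ⟨hs, hsleast⟩ hW
  obtain ⟨WL, hWL⟩ := exists_isTopK (sLVc E) E.k_le_card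
  obtain ⟨WA, hWA⟩ := exists_isTopK (sAVc E) E.k_le_card
  rw [Set.image_congr hLV, Set.image_congr hAV, Set.Nonempty.image_const ⟨WL, hWL⟩,
    Set.Nonempty.image_const ⟨WA, hWA⟩, csInf_singleton, csSup_singleton, Nat.cast_sum,
    Nat.cast_sum]

/-- In a broadcasted party-list election with strictly decreasing party
popularities, where every party has at least `l` candidates and the parties jointly
have at least `k` candidates, the CC-improvement of LV over AV equals
`(Σ_{i=1}^{min(⌈k/l⌉, g)} n_i) / (Σ_{j=1}^{s} n_j)`, where `s` is the least `t` with
`Σ_{i=1}^{t} |P_i| ≥ k`. -/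
theorem stmt2 (E : Election V C) (hPL : PartyList E) (hB : Broadcasted E)
    (g : ℕ) (P : Fin g → Finset C)
    (hPall : ∀ i : V, ∃ j, E.A i = P j)
    (hPrep : ∀ j, ∃ i : V, E.A i = P j)
    (hanti : ∀ j j' : Fin g, j < j' → nParty E (P j') < nParty E (P j))
    (hPl : ∀ j, E.l ≤ (P j).card)
    (hPk : E.k ≤ ∑ j : Fin g, (P j).card)
    (s : ℕ)
    (hs : E.k ≤ ∑ j ∈ univ.filter (fun j : Fin g => (j : ℕ) < s), (P j).card)
    (hsleast : ∀ t : ℕ,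
      E.k ≤ ∑ j ∈ univ.filter (fun j : Fin g => (j : ℕ) < t), (P j).card → s ≤ t) :
    ((sInf (sCC E '' LVwin E) : ℕ) : ℚ) / ((sSup (sCC E '' AVwin E) : ℕ) : ℚ) =
      (∑ j ∈ univ.filter (fun j : Fin g => (j : ℕ) < min ((E.k + E.l - 1) / E.l) g),
          (nParty E (P j) : ℚ)) /
        (∑ j ∈ univ.filter (fun j : Fin g => (j : ℕ) < s), (nParty E (P j) : ℚ)) :=
  stmt2_general E hPL hB g P hPall hPrep hanti hPl s hs hsleast
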